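/- arXiv:2412.02385 — 3 statements merged into one kernel-verified Lean document; each statement's English description precedes it below -/
import Mathlib

section
/- (Projection/Elimination lemma) Let S ∈ ℝ^{n×m} with rank(S) = m < n, T ∈ ℝ^{s×n} with rank(T) = s < n, and Ω ∈ ℝ^{n×n} symmetric. Let N_{S'} ∈ ℝ^{n×(n−m)} and N_T ∈ ℝ^{n×(n−s)} be matrices whose columns form orthonormal bases of the null spaces of S' and T respectively. Then there exists F ∈ ℝ^{m×s} satisfying Ω + SFT + (SFT)' ≺ 0 if and only if N_{S'}' Ω N_{S'} ≺ 0 and N_T' Ω N_T ≺ 0. -/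
open Matrix

theorem dself {k : ℕ} (x : Fin k → ℝ) : 0 ≤ x ⬝ᵥ x :=
  Finset.sum_nonneg fun i _ => mul_self_nonneg _

theorem dself_pos {k : ℕ} {x : Fin k → ℝ} (hx : x ≠ 0) : 0 < x ⬝ᵥ x :=
  lt_of_le_of_ne (dself x) fun h => hx (dotProduct_self_eq_zero.mp h.symm)

-- entrywise bilinear bound, division-free
theorem qbound {a b : ℕ} (M : Matrix (Fin a) (Fin b) ℝ) :
    ∃ C : ℝ, 0 < C ∧ ∀ (y : Fin a → ℝ) (w : Fin b → ℝ) (t : ℝ), 0 < t →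
      2 * t * (y ⬝ᵥ (M *ᵥ w)) ≤ C * (t ^ 2 * (y ⬝ᵥ y) + w ⬝ᵥ w) := by
  refine ⟨(∑ i, ∑ j, |M i j|) + 1, by positivity, fun y w t ht => ?_⟩
  have hyy : ∀ i, y i ^ 2 ≤ y ⬝ᵥ y := fun i => by
    have h := Finset.single_le_sum (fun j (_ : j ∈ Finset.univ) => mul_self_nonneg (y j))
      (Finset.mem_univ i)
    simpa [dotProduct, sq] using h
  have hww : ∀ j, w j ^ 2 ≤ w ⬝ᵥ w := fun j => by
    have h := Finset.single_le_sum (fun i (_ : i ∈ Finset.univ) => mul_self_nonneg (w i))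
      (Finset.mem_univ j)
    simpa [dotProduct, sq] using h
  have hQy : 0 ≤ y ⬝ᵥ y := dself y
  have hQw : 0 ≤ w ⬝ᵥ w := dself w
  have key : 2 * t * (y ⬝ᵥ (M *ᵥ w)) ≤ (∑ i, ∑ j, |M i j|) * (t ^ 2 * (y ⬝ᵥ y) + w ⬝ᵥ w) := by
    have expand : 2 * t * (y ⬝ᵥ (M *ᵥ w)) = ∑ i, ∑ j, 2 * t * (y i * (M i j * w j)) := by
      simp [dotProduct, mulVec, Finset.mul_sum]
    rw [expand, Finset.sum_mul]
    refine Finset.sum_le_sum fun i _ => ?_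
    rw [Finset.sum_mul]
    refine Finset.sum_le_sum fun j _ => ?_
    have h1 : 2 * t * (y i * (M i j * w j)) ≤ |M i j| * (2 * t * (|y i| * |w j|)) := by
      calc 2 * t * (y i * (M i j * w j)) ≤ |2 * t * (y i * (M i j * w j))| := le_abs_self _
        _ = |M i j| * (2 * t * (|y i| * |w j|)) := by
            rw [abs_mul, abs_mul, abs_mul, abs_mul, abs_of_pos ht, abs_of_pos two_pos]; ring
    have h2 : 2 * t * (|y i| * |w j|) ≤ t ^ 2 * (y ⬝ᵥ y) + w ⬝ᵥ w := by
      nlinarith [sq_nonneg (t * |y i| - |w j|), sq_abs (y i), sq_abs (w j), hyy i, hww j,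
        sq_nonneg t, ht.le]
    calc 2 * t * (y i * (M i j * w j)) ≤ |M i j| * (2 * t * (|y i| * |w j|)) := h1
      _ ≤ |M i j| * (t ^ 2 * (y ⬝ᵥ y) + w ⬝ᵥ w) := mul_le_mul_of_nonneg_left h2 (abs_nonneg _)
  have hsum : (0:ℝ) ≤ ∑ i, ∑ j, |M i j| :=
    Finset.sum_nonneg fun i _ => Finset.sum_nonneg fun j _ => abs_nonneg _
  nlinarith [key]

-- real posdef: unfold
theorem posdef_apply {k : ℕ} {M : Matrix (Fin k) (Fin k) ℝ} (hM : M.PosDef)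
    {x : Fin k → ℝ} (hx : x ≠ 0) : 0 < x ⬝ᵥ (M *ᵥ x) := by
  simpa using hM.dotProduct_mulVec_pos hx

theorem posdef_symm {k : ℕ} {M : Matrix (Fin k) (Fin k) ℝ} (hM : M.PosDef) : Mᵀ = M := by
  have := hM.1
  rwa [Matrix.IsHermitian, conjTranspose_eq_transpose_of_trivial] at this

-- symmetric flip: z ⬝ᵥ M x = x ⬝ᵥ M z for symmetric M
theorem dot_flip {k : ℕ} {M : Matrix (Fin k) (Fin k) ℝ} (hM : Mᵀ = M)
    (x z : Fin k → ℝ) : z ⬝ᵥ (M *ᵥ x) = x ⬝ᵥ (M *ᵥ z) := by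
  rw [dotProduct_mulVec, ← mulVec_transpose, hM, dotProduct_comm]

-- Cauchy-Schwarz for possemidef
theorem cs {k : ℕ} {M : Matrix (Fin k) (Fin k) ℝ} (hM : M.PosSemidef)
    (x z : Fin k → ℝ) : (x ⬝ᵥ (M *ᵥ z)) ^ 2 ≤ (x ⬝ᵥ (M *ᵥ x)) * (z ⬝ᵥ (M *ᵥ z)) := by
  have hsymm : Mᵀ = M := by
    have := hM.1; rwa [Matrix.IsHermitian, conjTranspose_eq_transpose_of_trivial] at this
  have h : ∀ t : ℝ, 0 ≤ (z ⬝ᵥ (M *ᵥ z)) * (t * t) + (2 * (x ⬝ᵥ (M *ᵥ z))) * t + x ⬝ᵥ (M *ᵥ x) := by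
    intro t
    have h0 : 0 ≤ (x + t • z) ⬝ᵥ (M *ᵥ (x + t • z)) := by simpa using hM.dotProduct_mulVec_nonneg (x + t • z)
    have hflip : z ⬝ᵥ (M *ᵥ x) = x ⬝ᵥ (M *ᵥ z) := dot_flip hsymm x z
    calc (0:ℝ) ≤ (x + t • z) ⬝ᵥ (M *ᵥ (x + t • z)) := h0
      _ = (z ⬝ᵥ (M *ᵥ z)) * (t * t) + (2 * (x ⬝ᵥ (M *ᵥ z))) * t + x ⬝ᵥ (M *ᵥ x) := by
          simp only [mulVec_add, mulVec_smul, add_dotProduct, smul_dotProduct,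
            dotProduct_add, dotProduct_smul, hflip, smul_eq_mul]
          ring
  have hd := discrim_le_zero h
  rw [discrim] at hd
  nlinarith [hd]

-- uniform lower bound for posdef
theorem posdef_lower {k : ℕ} {M : Matrix (Fin k) (Fin k) ℝ} (hM : M.PosDef) :
    ∃ α : ℝ, 0 < α ∧ ∀ x, α * (x ⬝ᵥ x) ≤ x ⬝ᵥ (M *ᵥ x) := by
  obtain ⟨C, hC, hCb⟩ := qbound M⁻¹
  refine ⟨1 / C, by positivity, fun x => ?_⟩
  by_cases hx : x = 0
  · simp [hx]
  have hMM : M * M⁻¹ = 1 := mul_nonsing_inv _ ((isUnit_iff_isUnit_det M).mp hM.isUnit)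
  set z := M⁻¹ *ᵥ x with hzdef
  have hz : M *ᵥ z = x := by rw [hzdef, mulVec_mulVec, hMM, one_mulVec]
  have hcs := cs hM.posSemidef x z
  have hzz : z ⬝ᵥ x = x ⬝ᵥ (M⁻¹ *ᵥ x) := by rw [dotProduct_comm]
  have hb := hCb x x 1 one_pos
  have hQ : 0 < x ⬝ᵥ x := dself_pos hx
  have hMx : 0 < x ⬝ᵥ (M *ᵥ x) := posdef_apply hM hx
  rw [hz, hzz] at hcs
  have hinvb : x ⬝ᵥ (M⁻¹ *ᵥ x) ≤ C * (x ⬝ᵥ x) := by nlinarith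
  rw [div_mul_eq_mul_div, div_le_iff₀ hC]
  nlinarith [mul_le_mul_of_nonneg_left hinvb hMx.le]

-- full column rank ⟹ injective mulVec
theorem inj_of_rank {a b : ℕ} {A : Matrix (Fin a) (Fin b) ℝ} (h : A.rank = b) :
    ∀ x, A *ᵥ x = 0 → x = 0 := by
  intro x hx
  have hrn := LinearMap.finrank_range_add_finrank_ker A.mulVecLin
  have hr : Module.finrank ℝ (LinearMap.range A.mulVecLin) = b := h
  rw [hr, Module.finrank_pi] at hrn
  simp only [Fintype.card_fin] at hrn
  have hker : Module.finrank ℝ (LinearMap.ker A.mulVecLin) = 0 := by omega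
  have hbot : LinearMap.ker A.mulVecLin = ⊥ := Submodule.finrank_eq_zero.mp hker
  have hmem : x ∈ LinearMap.ker A.mulVecLin := by
    simp [LinearMap.mem_ker, mulVecLin_apply, hx]
  rw [hbot, Submodule.mem_bot] at hmem
  exact hmem

-- full row rank ⟹ right inverse
theorem exists_rightInv {a b : ℕ} {A : Matrix (Fin a) (Fin b) ℝ} (h : A.rank = a) :
    ∃ B : Matrix (Fin b) (Fin a) ℝ, A * B = 1 := by
  have hr : Module.finrank ℝ (LinearMap.range A.mulVecLin) = a := h
  have htop : LinearMap.range A.mulVecLin = ⊤ := by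
    apply Submodule.eq_top_of_finrank_eq
    rw [hr, Module.finrank_pi]
    simp
  obtain ⟨g, hg⟩ := LinearMap.exists_rightInverse_of_surjective A.mulVecLin htop
  refine ⟨LinearMap.toMatrix' g, ?_⟩
  apply Matrix.toLin'.injective
  rw [Matrix.toLin'_mul, Matrix.toLin'_toMatrix', Matrix.toLin'_one]
  have : Matrix.toLin' A = A.mulVecLin := rfl
  rw [this, hg]

-- columns of N span ker A
theorem span_ker {a b c : ℕ} {A : Matrix (Fin a) (Fin b) ℝ} {N : Matrix (Fin b) (Fin c) ℝ}
    (hrank : A.rank = a) (hc : c = b - a) (hab : a ≤ b)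
    (hN1 : Nᵀ * N = 1) (hAN : A * N = 0) :
    ∀ x, A *ᵥ x = 0 → ∃ z, N *ᵥ z = x := by
  have hNinj : ∀ z, N *ᵥ z = 0 → z = 0 := by
    intro z hz
    have : (Nᵀ * N) *ᵥ z = Nᵀ *ᵥ (N *ᵥ z) := by rw [← mulVec_mulVec]
    rw [hN1, one_mulVec, hz, mulVec_zero] at this
    exact this
  have hNinj' : Function.Injective N.mulVecLin := by
    rw [injective_iff_map_eq_zero]
    intro z hz
    exact hNinj z hz
  have hrange_le : LinearMap.range N.mulVecLin ≤ LinearMap.ker A.mulVecLin := by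
    rintro x ⟨z, rfl⟩
    simp only [LinearMap.mem_ker, mulVecLin_apply, mulVec_mulVec, hAN, zero_mulVec]
  have hrn := LinearMap.finrank_range_add_finrank_ker A.mulVecLin
  have hr : Module.finrank ℝ (LinearMap.range A.mulVecLin) = a := hrank
  rw [hr, Module.finrank_pi] at hrn
  simp only [Fintype.card_fin] at hrn
  have hkerfin : Module.finrank ℝ (LinearMap.ker A.mulVecLin) = b - a := by omega
  have hrangeN : Module.finrank ℝ (LinearMap.range N.mulVecLin) = b - a := by
    rw [LinearMap.finrank_range_of_inj hNinj', Module.finrank_pi]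
    simp [hc]
  have heq : LinearMap.range N.mulVecLin = LinearMap.ker A.mulVecLin := by
    apply Submodule.eq_of_le_of_finrank_eq hrange_le
    rw [hrangeN, hkerfin]
  intro x hx
  have : x ∈ LinearMap.range N.mulVecLin := by
    rw [heq]; simp [LinearMap.mem_ker, mulVecLin_apply, hx]
  obtain ⟨z, hz⟩ := this
  exact ⟨z, hz⟩

theorem dot_mul_left {a b : ℕ} (M : Matrix (Fin a) (Fin b) ℝ) (y : Fin b → ℝ) (c : Fin a → ℝ) :
    (M *ᵥ y) ⬝ᵥ c = y ⬝ᵥ (Mᵀ *ᵥ c) := by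
  rw [dotProduct_comm, dotProduct_mulVec, ← mulVec_transpose, dotProduct_comm]

set_option maxHeartbeats 1000000 in
theorem finsler {n k : ℕ} (A : Matrix (Fin k) (Fin n) ℝ) (N : Matrix (Fin n) (Fin (n - k)) ℝ)
    (Ω : Matrix (Fin n) (Fin n) ℝ) (hΩ : Ωᵀ = Ω) (hk : k ≤ n)
    (hN1 : Nᵀ * N = 1) (hAN : A * N = 0) (hA : A.rank = k)
    (hneg : (-(Nᵀ * Ω * N)).PosDef) :
    ∃ σ : ℝ, 0 < σ ∧ (σ • (Aᵀ * A) - Ω).PosDef := by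
  obtain ⟨B, hB⟩ := exists_rightInv hA
  set R : Matrix (Fin n) (Fin k) ℝ := (1 - N * Nᵀ) * B with hRdef
  -- pointwise factorization
  have hfact : ∀ x : Fin n → ℝ, x - N *ᵥ (Nᵀ *ᵥ x) = R *ᵥ (A *ᵥ x) := by
    intro x
    have hd : A *ᵥ (x - B *ᵥ (A *ᵥ x)) = 0 := by
      rw [mulVec_sub, mulVec_mulVec, hB, one_mulVec, sub_self]
    obtain ⟨z, hz⟩ := span_ker hA rfl hk hN1 hAN _ hd
    have hNz : Nᵀ *ᵥ (x - B *ᵥ (A *ᵥ x)) = z := by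
      rw [← hz, mulVec_mulVec, hN1, one_mulVec]
    have hBx : B *ᵥ (A *ᵥ x) = x - N *ᵥ z := by rw [hz, sub_sub_cancel]
    calc x - N *ᵥ (Nᵀ *ᵥ x) = (x - N *ᵥ z) - N *ᵥ (Nᵀ *ᵥ (x - N *ᵥ z)) := by
          rw [show Nᵀ *ᵥ (x - N *ᵥ z) = Nᵀ *ᵥ x - z from by
            rw [mulVec_sub, mulVec_mulVec, hN1, one_mulVec], mulVec_sub]
          abel
      _ = (1 - N * Nᵀ) *ᵥ (x - N *ᵥ z) := by
          rw [sub_mulVec, one_mulVec, ← mulVec_mulVec]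
      _ = (1 - N * Nᵀ) *ᵥ (B *ᵥ (A *ᵥ x)) := by rw [hBx]
      _ = R *ᵥ (A *ᵥ x) := by rw [hRdef, ← mulVec_mulVec]
  obtain ⟨α, hα, hαb⟩ := posdef_lower hneg
  obtain ⟨C₁, hC₁, hC₁b⟩ := qbound (Nᵀ * Ω)
  obtain ⟨C₂, hC₂, hC₂b⟩ := qbound Ω
  obtain ⟨C₃, hC₃, hC₃b⟩ := qbound (Rᵀ * R)
  set t : ℝ := α / (2 * C₁) with htdef
  have htpos : 0 < t := by positivity
  set σ : ℝ := ((C₁ + t * C₂) * C₃) / t + 1 with hσdef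
  have hσt : t * σ = (C₁ + t * C₂) * C₃ + t := by
    rw [hσdef]; field_simp
  have hσpos : 0 < σ := by positivity
  refine ⟨σ, hσpos, posDef_iff_dotProduct_mulVec.mpr ⟨?_, ?_⟩⟩
  · -- hermitian
    rw [Matrix.IsHermitian, conjTranspose_eq_transpose_of_trivial, transpose_sub,
      transpose_smul, transpose_mul, transpose_transpose, hΩ]
  · intro x hx
    simp only [star_trivial]
    set y : Fin (n - k) → ℝ := Nᵀ *ᵥ x with hydef
    set u : Fin k → ℝ := A *ᵥ x with hudef
    set w : Fin n → ℝ := x - N *ᵥ y with hwdef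
    have hw : w = R *ᵥ u := hfact x
    have hxdec : x = N *ᵥ y + w := by rw [hwdef]; abel
    -- goal rewriting
    have hAAx : x ⬝ᵥ ((Aᵀ * A) *ᵥ x) = u ⬝ᵥ u := by
      rw [← mulVec_mulVec, ← hudef, dotProduct_mulVec, vecMul_transpose, ← hudef]
    have hgoal_eq : x ⬝ᵥ ((σ • (Aᵀ * A) - Ω) *ᵥ x) = σ * (u ⬝ᵥ u) - x ⬝ᵥ (Ω *ᵥ x) := by
      rw [sub_mulVec, dotProduct_sub, smul_mulVec, dotProduct_smul, hAAx, smul_eq_mul]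
    rw [hgoal_eq]
    -- splitting of xᵀΩx
    have hflipNw : w ⬝ᵥ (Ω *ᵥ (N *ᵥ y)) = y ⬝ᵥ ((Nᵀ * Ω) *ᵥ w) := by
      rw [dot_flip hΩ, dot_mul_left, mulVec_mulVec]
    have hsplit : x ⬝ᵥ (Ω *ᵥ x)
        = y ⬝ᵥ ((Nᵀ * Ω * N) *ᵥ y) + 2 * (y ⬝ᵥ ((Nᵀ * Ω) *ᵥ w)) + w ⬝ᵥ (Ω *ᵥ w) := by
      conv_lhs => rw [hxdec]
      simp only [mulVec_add, dotProduct_add, add_dotProduct]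
      have e1 : (N *ᵥ y) ⬝ᵥ (Ω *ᵥ (N *ᵥ y)) = y ⬝ᵥ ((Nᵀ * Ω * N) *ᵥ y) := by
        rw [dot_mul_left, mulVec_mulVec, mulVec_mulVec]
      have e2 : (N *ᵥ y) ⬝ᵥ (Ω *ᵥ w) = y ⬝ᵥ ((Nᵀ * Ω) *ᵥ w) := by
        rw [dot_mul_left, mulVec_mulVec]
      rw [e1, e2, hflipNw]
      ring
    -- bounds
    have hyb : y ⬝ᵥ ((Nᵀ * Ω * N) *ᵥ y) ≤ -(α * (y ⬝ᵥ y)) := by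
      have := hαb y
      rw [neg_mulVec, dotProduct_neg] at this
      linarith
    have hcross : 2 * t * (y ⬝ᵥ ((Nᵀ * Ω) *ᵥ w)) ≤ C₁ * (t ^ 2 * (y ⬝ᵥ y) + w ⬝ᵥ w) :=
      hC₁b y w t htpos
    have hΩw : w ⬝ᵥ (Ω *ᵥ w) ≤ C₂ * (w ⬝ᵥ w) := by
      have := hC₂b w w 1 one_pos
      nlinarith [this]
    have hQw : w ⬝ᵥ w ≤ C₃ * (u ⬝ᵥ u) := by
      have hww : w ⬝ᵥ w = u ⬝ᵥ ((Rᵀ * R) *ᵥ u) := by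
        rw [hw, dot_mul_left, mulVec_mulVec]
      have := hC₃b u u 1 one_pos
      nlinarith [this]
    -- nondegeneracy
    have hkey : 0 < y ⬝ᵥ y ∨ 0 < u ⬝ᵥ u := by
      by_contra hcon
      push_neg at hcon
      have hy0 : y = 0 := by
        have := dself y
        exact dotProduct_self_eq_zero.mp (le_antisymm hcon.1 this)
      have hu0 : u = 0 := by
        have := dself u
        exact dotProduct_self_eq_zero.mp (le_antisymm hcon.2 this)
      have hw0 : w = 0 := by rw [hw, hu0, mulVec_zero]
      apply hx
      rw [hxdec, hy0, hw0, mulVec_zero, add_zero]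
    have hQy := dself y
    have hQu := dself u
    have hQw0 := dself w
    -- abstract scalars
    set qy := y ⬝ᵥ y with hqy
    set qu := u ⬝ᵥ u with hqu
    set qw := w ⬝ᵥ w with hqw
    set ay := y ⬝ᵥ ((Nᵀ * Ω * N) *ᵥ y) with hay
    set cr := y ⬝ᵥ ((Nᵀ * Ω) *ᵥ w) with hcr
    set ow := w ⬝ᵥ (Ω *ᵥ w) with how
    set ox := x ⬝ᵥ (Ω *ᵥ x) with hox
    clear_value qy qu qw ay cr ow ox
    -- final: multiply goal by t
    have hsplitT : t * ox = t * (ay + 2 * cr + ow) := by rw [hsplit]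
    have htα : C₁ * t = α / 2 := by rw [htdef]; field_simp
    have e1 : C₁ * t ^ 2 * qy = α / 2 * (t * qy) := by
      rw [pow_two, ← mul_assoc, htα]; ring
    have e2 : t * σ * qu = ((C₁ + t * C₂) * C₃ + t) * qu := by rw [hσt]
    have hybT := mul_le_mul_of_nonneg_left hyb htpos.le
    have hΩwT := mul_le_mul_of_nonneg_left hΩw htpos.le
    have hQwT := mul_le_mul_of_nonneg_left hQw (by positivity : (0:ℝ) ≤ C₁ + t * C₂)
    have hkey2 := hkey
    clear hsplit hyb hΩw hQw hfact hαb hC₁b hC₂b hC₃b hσdef htdef hσt hw hxdec hAAx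
      hgoal_eq hflipNw hydef hudef hwdef hqy hqu hqw hay hcr how hox hB hRdef hN1 hAN hΩ hneg
      hA hx x y u w B R N A Ω htα
    have hmain : 0 < t * (σ * qu - ox) := by
      rcases hkey2 with hpos | hpos
      · linarith [hsplitT, hybT, hcross, hΩwT, hQwT, e1, e2,
          mul_pos hα (mul_pos htpos hpos), mul_nonneg htpos.le hQu]
      · linarith [hsplitT, hybT, hcross, hΩwT, hQwT, e1, e2, mul_pos htpos hpos,
          mul_nonneg hα.le (mul_nonneg htpos.le hQy)]
    nlinarith [hmain, htpos]

set_option maxHeartbeats 1000000 in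
theorem elim_main {n sd : ℕ} (hsd : sd ≤ n)
    (T : Matrix (Fin sd) (Fin n) ℝ) (hT : T.rank = sd)
    (Ω SS : Matrix (Fin n) (Fin n) ℝ) (hΩ : Ωᵀ = Ω) (hSS : SSᵀ = SS)
    (hSSpsd : ∀ v : Fin n → ℝ, 0 ≤ v ⬝ᵥ (SS *ᵥ v))
    (NT : Matrix (Fin n) (Fin (n - sd)) ℝ) (hNT1 : NTᵀ * NT = 1) (hNT2 : T * NT = 0)
    (hNTneg : (-(NTᵀ * Ω * NT)).PosDef) (σ : ℝ) (hσ : 0 < σ)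
    (hΦ : (σ • SS - Ω).PosDef) :
    (-(Ω + (-σ) • (SS * ((σ • SS - Ω)⁻¹ * Tᵀ * (T * (σ • SS - Ω)⁻¹ * Tᵀ)⁻¹ * T))
        + ((-σ) • (SS * ((σ • SS - Ω)⁻¹ * Tᵀ * (T * (σ • SS - Ω)⁻¹ * Tᵀ)⁻¹ * T)))ᵀ)).PosDef := by
  set Φ : Matrix (Fin n) (Fin n) ℝ := σ • SS - Ω with hΦdef
  have hΦsymm : Φᵀ = Φ := posdef_symm hΦ
  have hΦinv : Φ⁻¹.PosDef := hΦ.inv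
  have hΦinvsymm : (Φ⁻¹)ᵀ = Φ⁻¹ := posdef_symm hΦinv
  have hΦmul : Φ * Φ⁻¹ = 1 := mul_nonsing_inv _ ((isUnit_iff_isUnit_det Φ).mp hΦ.isUnit)
  have hΦmul' : Φ⁻¹ * Φ = 1 := nonsing_inv_mul _ ((isUnit_iff_isUnit_det Φ).mp hΦ.isUnit)
  set G : Matrix (Fin sd) (Fin sd) ℝ := T * Φ⁻¹ * Tᵀ with hGdef
  have hGsymm : Gᵀ = G := by
    rw [hGdef, transpose_mul, transpose_mul, transpose_transpose, hΦinvsymm, Matrix.mul_assoc]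
  have hTtrank : Tᵀ.rank = sd := by rw [rank_transpose]; exact hT
  have hG : G.PosDef := by
    refine posDef_iff_dotProduct_mulVec.mpr ⟨?_, ?_⟩
    · rw [Matrix.IsHermitian, conjTranspose_eq_transpose_of_trivial, hGsymm]
    · intro x hx
      simp only [star_trivial]
      have hTx : Tᵀ *ᵥ x ≠ 0 := fun h => hx (inj_of_rank hTtrank x h)
      have he : x ⬝ᵥ (G *ᵥ x) = (Tᵀ *ᵥ x) ⬝ᵥ (Φ⁻¹ *ᵥ (Tᵀ *ᵥ x)) := by
        rw [hGdef, ← mulVec_mulVec, ← mulVec_mulVec, dotProduct_mulVec, ← mulVec_transpose]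
      rw [he]
      exact posdef_apply hΦinv hTx
  have hGmul : G * G⁻¹ = 1 := mul_nonsing_inv _ ((isUnit_iff_isUnit_det G).mp hG.isUnit)
  have hGmul' : G⁻¹ * G = 1 := nonsing_inv_mul _ ((isUnit_iff_isUnit_det G).mp hG.isUnit)
  have hGinv : G⁻¹.PosDef := hG.inv
  have hGinvsymm : (G⁻¹)ᵀ = G⁻¹ := posdef_symm hGinv
  set P : Matrix (Fin n) (Fin n) ℝ := Φ⁻¹ * Tᵀ * G⁻¹ * T with hPdef
  set Z : Matrix (Fin n) (Fin n) ℝ := Tᵀ * G⁻¹ * T with hZdef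
  have hTP : T * P = T := by
    rw [hPdef, ← Matrix.mul_assoc, ← Matrix.mul_assoc, ← Matrix.mul_assoc, ← hGdef, hGmul,
      Matrix.one_mul]
  have hΦP : Φ * P = Z := by
    rw [hPdef, ← Matrix.mul_assoc, ← Matrix.mul_assoc, ← Matrix.mul_assoc, hΦmul,
      Matrix.one_mul, hZdef]
  have hPt : Pᵀ = Z * Φ⁻¹ := by
    rw [hPdef, hZdef, transpose_mul, transpose_mul, transpose_mul, transpose_transpose,
      hΦinvsymm, hGinvsymm]
    simp only [Matrix.mul_assoc]
  have hPtΦ : Pᵀ * Φ = Z := by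
    rw [hPt, Matrix.mul_assoc, hΦmul', Matrix.mul_one]
  have hΦinvZ : Φ⁻¹ * Z = P := by
    rw [hZdef, hPdef]; simp only [Matrix.mul_assoc]
  have hZP : Z * P = Z := by
    rw [hZdef, Matrix.mul_assoc (Tᵀ * G⁻¹) T P, hTP]
  have hPtZ : Pᵀ * Z = Z := by
    rw [hPt, Matrix.mul_assoc, hΦinvZ, hZP]
  have hZsymm : Zᵀ = Z := by
    rw [hZdef, transpose_mul, transpose_mul, transpose_transpose, hGinvsymm]
    simp only [Matrix.mul_assoc]
  have hσSS : σ • SS = Φ + Ω := by rw [hΦdef, sub_add_cancel]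
  have e1 : σ • (SS * P) = Z + Ω * P := by
    rw [← smul_mul_assoc, hσSS, Matrix.add_mul, hΦP]
  have e1' : σ • (Pᵀ * SS) = Z + Pᵀ * Ω := by
    rw [← mul_smul_comm, hσSS, Matrix.mul_add, hPtΦ]
  have e2 : σ • (Pᵀ * SS * P) = Z + Pᵀ * Ω * P := by
    rw [← smul_mul_assoc, e1', Matrix.add_mul, hZP]
  -- main identity
  have emain : -(Ω + (-σ) • (SS * P) + ((-σ) • (SS * P))ᵀ)
      = Z + σ • (Pᵀ * SS * P) - (1 - P)ᵀ * Ω * (1 - P) := by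
    have hXt : ((-σ) • (SS * P))ᵀ = (-σ) • (Pᵀ * SS) := by
      rw [transpose_smul, transpose_mul, hSS]
    rw [hXt, neg_smul, neg_smul, e2]
    have eW : (1 - P)ᵀ * Ω * (1 - P)
        = Ω - Ω * P - Pᵀ * Ω + Pᵀ * Ω * P := by
      rw [transpose_sub, transpose_one, Matrix.sub_mul, Matrix.sub_mul, Matrix.mul_sub,
        Matrix.mul_sub, Matrix.one_mul, Matrix.mul_one, Matrix.mul_one, Matrix.mul_assoc]
      abel
    rw [eW]
    have h1 : σ • (SS * P) = Z + Ω * P := e1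
    have h1' : σ • (Pᵀ * SS) = Z + Pᵀ * Ω := e1'
    rw [h1, h1']
    abel
  rw [emain]
  refine posDef_iff_dotProduct_mulVec.mpr ⟨?_, ?_⟩
  · rw [Matrix.IsHermitian, conjTranspose_eq_transpose_of_trivial]
    simp only [transpose_sub, transpose_add, transpose_smul, transpose_mul, transpose_transpose,
      hZsymm, hSS, hΩ, Matrix.mul_assoc]
  · intro x hx
    simp only [star_trivial]
    set w : Fin n → ℝ := x - P *ᵥ x with hwdef
    have hTw : T *ᵥ w = 0 := by
      rw [hwdef, mulVec_sub, mulVec_mulVec, hTP, sub_self]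
    have tz_eq : x ⬝ᵥ (Z *ᵥ x) = (T *ᵥ x) ⬝ᵥ (G⁻¹ *ᵥ (T *ᵥ x)) := by
      rw [hZdef, ← mulVec_mulVec, ← mulVec_mulVec, dotProduct_mulVec, ← mulVec_transpose,
        transpose_transpose]
    have tp_eq : x ⬝ᵥ ((Pᵀ * SS * P) *ᵥ x) = (P *ᵥ x) ⬝ᵥ (SS *ᵥ (P *ᵥ x)) := by
      rw [Matrix.mul_assoc, ← mulVec_mulVec, ← dot_mul_left, ← mulVec_mulVec x SS P]
    have tw_eq : x ⬝ᵥ (((1 - P)ᵀ * Ω * (1 - P)) *ᵥ x) = w ⬝ᵥ (Ω *ᵥ w) := by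
      rw [Matrix.mul_assoc, ← mulVec_mulVec, ← dot_mul_left, ← mulVec_mulVec]
      have : (1 - P) *ᵥ x = w := by rw [sub_mulVec, one_mulVec, hwdef]
      rw [this]
    have hval : x ⬝ᵥ ((Z + σ • (Pᵀ * SS * P) - (1 - P)ᵀ * Ω * (1 - P)) *ᵥ x)
        = x ⬝ᵥ (Z *ᵥ x) + σ * (x ⬝ᵥ ((Pᵀ * SS * P) *ᵥ x)) - w ⬝ᵥ (Ω *ᵥ w) := by
      rw [sub_mulVec, add_mulVec, dotProduct_sub, dotProduct_add, smul_mulVec,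
        dotProduct_smul, smul_eq_mul, tw_eq]
    rw [hval, tz_eq, tp_eq]
    have hnn1 : 0 ≤ (T *ᵥ x) ⬝ᵥ (G⁻¹ *ᵥ (T *ᵥ x)) := by
      by_cases h : T *ᵥ x = 0
      · simp [h]
      · exact (posdef_apply hGinv h).le
    have hnn2 : 0 ≤ σ * ((P *ᵥ x) ⬝ᵥ (SS *ᵥ (P *ᵥ x))) :=
      mul_nonneg hσ.le (hSSpsd _)
    by_cases hw : w = 0
    · -- then T x ≠ 0
      have hTx : T *ᵥ x ≠ 0 := by
        intro h
        apply hx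
        have hxP : x = P *ᵥ x := by
          have := hw
          rw [hwdef, sub_eq_zero] at this
          exact this
        rw [hxP, hPdef, ← mulVec_mulVec, h, mulVec_zero]
      have h1 : 0 < (T *ᵥ x) ⬝ᵥ (G⁻¹ *ᵥ (T *ᵥ x)) := posdef_apply hGinv hTx
      have hw0 : w ⬝ᵥ (Ω *ᵥ w) = 0 := by rw [hw]; simp
      linarith [h1, hnn2, hw0]
    · obtain ⟨z, hz⟩ := span_ker hT rfl hsd hNT1 hNT2 w hTw
      have hzne : z ≠ 0 := by
        intro h; apply hw; rw [← hz, h, mulVec_zero]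
      have hwΩ : w ⬝ᵥ (Ω *ᵥ w) = z ⬝ᵥ ((NTᵀ * Ω * NT) *ᵥ z) := by
        rw [← hz, dot_mul_left, mulVec_mulVec, mulVec_mulVec, Matrix.mul_assoc]
      have h3 : 0 < z ⬝ᵥ ((-(NTᵀ * Ω * NT)) *ᵥ z) := posdef_apply hNTneg hzne
      rw [neg_mulVec, dotProduct_neg] at h3
      nlinarith [hnn1, hnn2, hwΩ, h3]

-- congruence for forward direction
theorem congr_posdef {a b : ℕ} {M : Matrix (Fin a) (Fin a) ℝ} (hM : M.PosDef)
    (hMsymm : Mᵀ = M)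
    (B : Matrix (Fin a) (Fin b) ℝ) (hB : ∀ z, B *ᵥ z = 0 → z = 0) :
    (Bᵀ * M * B).PosDef := by
  refine posDef_iff_dotProduct_mulVec.mpr ⟨?_, ?_⟩
  · rw [Matrix.IsHermitian, conjTranspose_eq_transpose_of_trivial, transpose_mul, transpose_mul,
      transpose_transpose, hMsymm, Matrix.mul_assoc]
  · intro x hx
    simp only [star_trivial]
    have hBx : B *ᵥ x ≠ 0 := fun h => hx (hB x h)
    have he : x ⬝ᵥ ((Bᵀ * M * B) *ᵥ x) = (B *ᵥ x) ⬝ᵥ (M *ᵥ (B *ᵥ x)) := by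
      rw [Matrix.mul_assoc, ← mulVec_mulVec, ← dot_mul_left, ← mulVec_mulVec x M B]
    rw [he]
    exact posdef_apply hM hBx

/-- Projection (elimination) lemma: with `rank S = m < n`, `rank T = s < n`, `Ω` symmetric,
and `N_{S'}`, `N_T` matrices whose columns are orthonormal bases of `ker S'` and `ker T`,
there exists `F` with `Ω + SFT + (SFT)' ≺ 0` iff
`N_{S'}' Ω N_{S'} ≺ 0` and `N_T' Ω N_T ≺ 0`. -/
theorem stmt6 {n m s : ℕ} (hm : m < n) (hs : s < n)
    (S : Matrix (Fin n) (Fin m) ℝ) (hSrank : S.rank = m)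
    (T : Matrix (Fin s) (Fin n) ℝ) (hTrank : T.rank = s)
    (Ω : Matrix (Fin n) (Fin n) ℝ) (hΩ : Ω.IsSymm)
    (NS : Matrix (Fin n) (Fin (n - m)) ℝ) (hNS1 : NSᵀ * NS = 1) (hNS2 : Sᵀ * NS = 0)
    (NT : Matrix (Fin n) (Fin (n - s)) ℝ) (hNT1 : NTᵀ * NT = 1) (hNT2 : T * NT = 0) :
    (∃ F : Matrix (Fin m) (Fin s) ℝ, (-(Ω + S * F * T + (S * F * T)ᵀ)).PosDef) ↔
      (-(NSᵀ * Ω * NS)).PosDef ∧ (-(NTᵀ * Ω * NT)).PosDef := by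
  have hΩsymm : Ωᵀ = Ω := hΩ
  constructor
  · rintro ⟨F, hF⟩
    have hMsymm : (-(Ω + S * F * T + (S * F * T)ᵀ))ᵀ = -(Ω + S * F * T + (S * F * T)ᵀ) := by
      rw [transpose_neg, transpose_add, transpose_add, hΩsymm, transpose_transpose]
      abel
    constructor
    · have hNSinj : ∀ z, NS *ᵥ z = 0 → z = 0 := by
        intro z hz
        have : (NSᵀ * NS) *ᵥ z = NSᵀ *ᵥ (NS *ᵥ z) := by rw [mulVec_mulVec]
        rw [hNS1, one_mulVec, hz, mulVec_zero] at this
        exact this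
      have h := congr_posdef hF hMsymm NS hNSinj
      have hNSS : NSᵀ * S = 0 := by
        have := congrArg transpose hNS2
        rwa [transpose_mul, transpose_transpose, transpose_zero] at this
      have he : NSᵀ * (-(Ω + S * F * T + (S * F * T)ᵀ)) * NS = -(NSᵀ * Ω * NS) := by
        rw [Matrix.mul_neg, Matrix.neg_mul, Matrix.mul_add, Matrix.mul_add, Matrix.add_mul,
          Matrix.add_mul]
        have h1 : NSᵀ * (S * F * T) * NS = 0 := by
          rw [← Matrix.mul_assoc, ← Matrix.mul_assoc, hNSS, Matrix.zero_mul, Matrix.zero_mul,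
            Matrix.zero_mul]
        have h2 : NSᵀ * (S * F * T)ᵀ * NS = 0 := by
          rw [transpose_mul, transpose_mul, ← Matrix.mul_assoc, ← Matrix.mul_assoc]
          rw [Matrix.mul_assoc (NSᵀ * Tᵀ * Fᵀ) Sᵀ NS, hNS2, Matrix.mul_zero]
        rw [h1, h2, add_zero, add_zero]
      rw [he] at h
      exact h
    · have hNTinj : ∀ z, NT *ᵥ z = 0 → z = 0 := by
        intro z hz
        have : (NTᵀ * NT) *ᵥ z = NTᵀ *ᵥ (NT *ᵥ z) := by rw [mulVec_mulVec]
        rw [hNT1, one_mulVec, hz, mulVec_zero] at this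
        exact this
      have h := congr_posdef hF hMsymm NT hNTinj
      have hTNT : Tᵀᵀ * NT = 0 := by rwa [transpose_transpose]
      have he : NTᵀ * (-(Ω + S * F * T + (S * F * T)ᵀ)) * NT = -(NTᵀ * Ω * NT) := by
        rw [Matrix.mul_neg, Matrix.neg_mul, Matrix.mul_add, Matrix.mul_add, Matrix.add_mul,
          Matrix.add_mul]
        have h1 : NTᵀ * (S * F * T) * NT = 0 := by
          rw [Matrix.mul_assoc (NTᵀ) (S * F * T) NT, Matrix.mul_assoc (S * F) T NT, hNT2,
            Matrix.mul_zero, Matrix.mul_zero]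
        have h2 : NTᵀ * (S * F * T)ᵀ * NT = 0 := by
          rw [transpose_mul, ← Matrix.mul_assoc, Matrix.mul_assoc (NTᵀ * Tᵀ) (S * F)ᵀ NT]
          rw [show NTᵀ * Tᵀ = 0 from by
            have := congrArg transpose hNT2
            rwa [transpose_mul, transpose_zero] at this]
          rw [Matrix.zero_mul]
        rw [h1, h2, add_zero, add_zero]
      rw [he] at h
      exact h
  · rintro ⟨hNSneg, hNTneg⟩
    have hStrank : Sᵀ.rank = m := by rw [rank_transpose]; exact hSrank
    obtain ⟨σ, hσ, hΦ⟩ := finsler Sᵀ NS Ω hΩsymm hm.le hNS1 hNS2 hStrank hNSneg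
    rw [transpose_transpose] at hΦ
    have hSSsymm : (S * Sᵀ)ᵀ = S * Sᵀ := by
      rw [transpose_mul, transpose_transpose]
    have hSSpsd : ∀ v : Fin n → ℝ, 0 ≤ v ⬝ᵥ ((S * Sᵀ) *ᵥ v) := by
      intro v
      have : v ⬝ᵥ ((S * Sᵀ) *ᵥ v) = (Sᵀ *ᵥ v) ⬝ᵥ (Sᵀ *ᵥ v) := by
        rw [← mulVec_mulVec, dotProduct_mulVec, ← mulVec_transpose]
      rw [this]
      exact Finset.sum_nonneg fun i _ => mul_self_nonneg _
    have h := elim_main hs.le T hTrank Ω (S * Sᵀ) hΩsymm hSSsymm hSSpsd NT hNT1 hNT2 hNTneg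
      σ hσ hΦ
    set Φ : Matrix (Fin n) (Fin n) ℝ := σ • (S * Sᵀ) - Ω with hΦdef
    refine ⟨(-σ) • (Sᵀ * (Φ⁻¹ * Tᵀ * (T * Φ⁻¹ * Tᵀ)⁻¹)), ?_⟩
    have hfeq : S * ((-σ) • (Sᵀ * (Φ⁻¹ * Tᵀ * (T * Φ⁻¹ * Tᵀ)⁻¹))) * T
        = (-σ) • ((S * Sᵀ) * (Φ⁻¹ * Tᵀ * (T * Φ⁻¹ * Tᵀ)⁻¹ * T)) := by
      rw [Matrix.mul_smul, Matrix.smul_mul]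
      congr 1
      simp only [Matrix.mul_assoc]
    rw [hfeq]
    exact h
end

section
/- (Upper bound on the worst-case cost) Under the hypotheses of Lemma 3.1 (P ≻ 0 with Ā'P + PĀ + C'Q̄C + PGP ≺ 0, x₀'Px₀ < δ, and Ā+GP Hurwitz), the worst-case cost satisfies J(d̄) = x₀'Px₀ − x₀'Yx₀ < δ, where Y ≻ 0 is the unique solution of the Lyapunov equation (Ā+GP)'Y + Y(Ā+GP) = −Q† with Q† := −(Ā'P + PĀ + C'Q̄C + PGP) ≻ 0. -/
/-! Along `x(t) = e^{tA} x₀`, `A = Ā + GP`, one has `d/dt x'Mx = x'(A'M + MA)x`, and since `A` is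
Hurwitz, `e^{tA}` decays exponentially; hence `∫₀^∞ x'(A'M + MA)x dt = -x₀'Mx₀` for every `M`.
With `M = Y` this gives `x₀'Yx₀ = ∫₀^∞ x'Q†x dt > 0`. With `M = P - Y` the Lyapunov equation turns
the cost integrand `x'C'Q̄Cx - d̄'Dd̄ = x'(C'Q̄C - PGP)x` into `-x'(A'M + MA)x`, so the cost is
`x₀'Px₀ - x₀'Yx₀ ≤ x₀'Px₀ < δ`.

The exponential decay comes from Gelfand's formula: the spectrum of `e^A` lies in `exp σ(A)`,
inside the open unit disc, so some power `e^{mA}` has norm `< 1`, and the semigroup property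
does the rest. -/

open Matrix MeasureTheory

/-- `A` is Hurwitz (stable): every eigenvalue of `A` has negative real part. -/
def IsHurwitz {n : ℕ} (A : Matrix (Fin n) (Fin n) ℝ) : Prop :=
  ∀ μ ∈ spectrum ℂ (A.map (algebraMap ℝ ℂ)), μ.re < 0

open Filter Asymptotics Set

theorem spectrum.exists_norm_pow_lt_one {𝔸 : Type*} [NormedRing 𝔸] [NormedAlgebra ℂ 𝔸]
    [CompleteSpace 𝔸] (a : 𝔸) (h : ∀ z ∈ spectrum ℂ a, ‖z‖ < 1) :
    ∃ m : ℕ, 0 < m ∧ ‖a ^ m‖ < 1 := by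
  cases subsingleton_or_nontrivial 𝔸
  · exact ⟨1, one_pos, by simp [Subsingleton.elim (a ^ 1) 0]⟩
  have hρ : spectralRadius ℂ a < (1 : NNReal) :=
    spectrum.spectralRadius_lt_of_forall_lt a fun z hz => by exact_mod_cast h z hz
  obtain ⟨m, hm, hm0⟩ := ((spectrum.pow_nnnorm_pow_one_div_tendsto_nhds_spectralRadius a
    |>.eventually_lt_const hρ).and (eventually_gt_atTop 0)).exists
  refine ⟨m, hm0, ?_⟩
  by_contra! h1
  have hge : (1 : ENNReal) ≤ (‖a ^ m‖₊ : ENNReal) ^ (1 / m : ℝ) :=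
    ENNReal.one_le_rpow (by exact_mod_cast h1) (by positivity)
  exact (hge.trans_lt hm).false

theorem exists_isBigO_exp_neg_of_map_add_eq_mul {𝔸 : Type*} [NormedRing 𝔸] {f : ℝ → 𝔸}
    (hf : Continuous f) (hadd : ∀ s t, f (s + t) = f s * f t) {m : ℝ} (hm : 0 < m)
    (hfm : ‖f m‖ < 1) : ∃ ε > 0, f =O[atTop] fun t => Real.exp (-ε * t) := by
  -- `ρ` is kept away from `0` so that `ρ ^ k` can be compared with the exponential `ρ ^ (t / m)`.
  set ρ := max ‖f m‖ (1 / 2)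
  have hρ0 : 0 < ρ := lt_max_of_lt_right one_half_pos
  have hρ1 : ρ < 1 := max_lt hfm one_half_lt_one
  obtain ⟨K, hK⟩ := isCompact_Icc.exists_bound_of_continuousOn (hf.continuousOn (s := Icc 0 m))
  have hpow : ∀ s (k : ℕ), ‖f (s + k * m)‖ ≤ ‖f s‖ * ρ ^ k := by
    intro s k
    induction k with
    | zero => simp
    | succ k ih =>
      rw [Nat.cast_succ, add_one_mul, ← add_assoc, hadd, pow_succ, ← mul_assoc]
      exact norm_mul_le_of_le ih (le_max_left _ _)
  refine ⟨-Real.log ρ / m, div_pos (neg_pos.2 (Real.log_neg hρ0 hρ1)) hm, ?_⟩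
  refine IsBigO.of_bound (K / ρ) ?_
  filter_upwards [eventually_ge_atTop 0] with t ht
  set k := ⌊t / m⌋₊
  have hk : t / m - 1 ≤ k := by linarith [Nat.lt_floor_add_one (t / m)]
  have hs : t - k * m ∈ Icc 0 m := by
    have hkt : k * m ≤ t := (le_div_iff₀ hm).1 (Nat.floor_le (div_nonneg ht hm.le))
    have htk : t ≤ (k + 1) * m := (div_le_iff₀ hm).1 (by linarith)
    constructor <;> linarith
  calc ‖f t‖ = ‖f ((t - k * m) + k * m)‖ := by rw [sub_add_cancel]
    _ ≤ K * ρ ^ k := (hpow _ k).trans (mul_le_mul_of_nonneg_right (hK _ hs) (by positivity))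
    _ ≤ K * (ρ ^ (t / m) * ρ⁻¹) := by
        gcongr
        · exact (norm_nonneg _).trans (hK 0 ⟨le_rfl, hm.le⟩)
        rw [← div_eq_mul_inv, ← Real.rpow_sub_one hρ0.ne', ← Real.rpow_natCast]
        exact Real.rpow_le_rpow_of_exponent_ge hρ0 hρ1.le hk
    _ = K / ρ * ‖Real.exp (-(-Real.log ρ / m) * t)‖ := by
        rw [Real.norm_eq_abs, abs_of_pos (Real.exp_pos _), Real.rpow_def_of_pos hρ0]
        field_simp

theorem Matrix.transpose_inv_mul_mul_mul_inv_mul {R m k : Type*} [CommRing R] [Fintype m]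
    [DecidableEq m] [Fintype k] {D : Matrix m m R} (hD : D.IsSymm) (hdet : IsUnit D.det)
    (E : Matrix k m R) (P : Matrix k k R) :
    (D⁻¹ * Eᵀ * P)ᵀ * D * (D⁻¹ * Eᵀ * P) = Pᵀ * (E * D⁻¹ * Eᵀ) * P := by
  rw [transpose_mul, transpose_mul, transpose_transpose, transpose_nonsing_inv, hD.eq]
  simp only [Matrix.mul_assoc, nonsing_inv_mul_cancel_left D _ hdet]

theorem Matrix.transpose_mul_sub_add_sub_mul_eq {R m : Type*} [CommRing R] [Fintype m]
    {Abar G P Y S : Matrix m m R} (hG : Gᵀ = G) (hP : Pᵀ = P)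
    (hY : (Abar + G * P)ᵀ * Y + Y * (Abar + G * P) = Abarᵀ * P + P * Abar + S + P * G * P) :
    (Abar + G * P)ᵀ * (P - Y) + (P - Y) * (Abar + G * P) = P * G * P - S := by
  rw [show (Abar + G * P)ᵀ * (P - Y) + (P - Y) * (Abar + G * P) =
      (Abar + G * P)ᵀ * P + P * (Abar + G * P) - ((Abar + G * P)ᵀ * Y + Y * (Abar + G * P)) by
    noncomm_ring, hY, transpose_add, transpose_mul, hG, hP]
  noncomm_ring

theorem Matrix.mulVec_dotProduct_mulVec_mulVec {R m k : Type*} [CommSemiring R] [Fintype m]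
    [Fintype k] (B : Matrix m k R) (N : Matrix m m R) (v : k → R) :
    (B *ᵥ v) ⬝ᵥ (N *ᵥ (B *ᵥ v)) = v ⬝ᵥ ((Bᵀ * N * B) *ᵥ v) := by
  rw [← mulVec_mulVec, ← mulVec_mulVec, dotProduct_mulVec v Bᵀ, vecMul_transpose]

section

attribute [local instance] Matrix.linftyOpNormedRing Matrix.linftyOpNormedAlgebra

variable {n : ℕ}

theorem Matrix.exp_mulVec_of_mulVec_eq_smul {B : Matrix (Fin n) (Fin n) ℂ} {μ : ℂ}
    {v : Fin n → ℂ} (hv : B *ᵥ v = μ • v) : NormedSpace.exp B *ᵥ v = Complex.exp μ • v := by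
  have hpow : ∀ k : ℕ, B ^ k *ᵥ v = μ ^ k • v := by
    intro k
    induction k with
    | zero => simp
    | succ k ih => rw [pow_succ', ← mulVec_mulVec, ih, mulVec_smul, hv, smul_smul, ← pow_succ]
  have hB := (NormedSpace.exp_series_hasSum_exp' (𝕂 := ℂ) B).map (mulVec.addMonoidHomLeft v)
    (continuous_id.matrix_mulVec continuous_const)
  rw [Complex.exp_eq_exp_ℂ]
  refine hB.unique ?_
  convert (NormedSpace.exp_series_hasSum_exp' (𝕂 := ℂ) μ).smul_const v using 1
  ext k : 1
  simp [mulVec.addMonoidHomLeft, smul_mulVec, hpow, smul_smul]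

theorem Matrix.spectrum_exp_subset (B : Matrix (Fin n) (Fin n) ℂ) :
    spectrum ℂ (NormedSpace.exp B) ⊆ Complex.exp '' spectrum ℂ B := by
  cases subsingleton_or_nontrivial (Matrix (Fin n) (Fin n) ℂ)
  · simp [spectrum.of_subsingleton]
  -- `exp B` is a polynomial in `B`, since the finite-dimensional `Algebra.adjoin ℂ {B}` is closed.
  have hmem : NormedSpace.exp B ∈ Algebra.adjoin ℂ {B} :=
    NormedSpace.exp_mem (R := ℂ) (s := Algebra.adjoin ℂ {B})
      (Submodule.closed_of_finiteDimensional (Subalgebra.toSubmodule (Algebra.adjoin ℂ {B})))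
      (Algebra.self_mem_adjoin_singleton ℂ B)
  rw [Algebra.adjoin_singleton_eq_range_aeval] at hmem
  obtain ⟨p, hp : Polynomial.aeval B p = NormedSpace.exp B⟩ := hmem
  rw [← hp, spectrum.map_polynomial_aeval]
  rintro _ ⟨z, hz, rfl⟩
  refine ⟨z, hz, ?_⟩
  rw [← spectrum_toLin', ← Module.End.hasEigenvalue_iff_mem_spectrum] at hz
  obtain ⟨v, hv⟩ := hz.exists_hasEigenvector
  have hexp : NormedSpace.exp B *ᵥ v = Complex.exp z • v :=
    exp_mulVec_of_mulVec_eq_smul (by simpa using hv.apply_eq_smul)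
  have haeval := Module.End.aeval_apply_of_hasEigenvector (p := p) hv
  have hlin : Polynomial.aeval (toLin' B) p = toLin' (Polynomial.aeval B p) :=
    Polynomial.aeval_algHom_apply toLinAlgEquiv' B p
  rw [hlin, hp, toLin'_apply, hexp] at haeval
  exact smul_left_injective ℂ hv.2 haeval

theorem IsHurwitz.exists_isBigO_exp_smul {A : Matrix (Fin n) (Fin n) ℝ} (hA : IsHurwitz A) :
    ∃ ε > 0, (fun t : ℝ => NormedSpace.exp (t • A)) =O[atTop] fun t => Real.exp (-ε * t) := by
  set B := A.map (algebraMap ℝ ℂ)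
  have hspec : ∀ z ∈ spectrum ℂ (NormedSpace.exp B), ‖z‖ < 1 := by
    intro z hz
    obtain ⟨w, hw, rfl⟩ := spectrum_exp_subset B hz
    rw [Complex.norm_exp, Real.exp_lt_one_iff]
    exact hA w hw
  obtain ⟨m, hm, hBm⟩ := spectrum.exists_norm_pow_lt_one _ hspec
  refine exists_isBigO_exp_neg_of_map_add_eq_mul (by fun_prop) (fun s t => ?_)
    (Nat.cast_pos.2 hm) ?_
  · rw [add_smul, Matrix.exp_add_of_commute]
    exact ((Commute.refl A).smul_left s).smul_right t
  · rw [Nat.cast_smul_eq_nsmul, Matrix.exp_nsmul]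
    have hexpB : (NormedSpace.exp A).map (algebraMap ℝ ℂ) = NormedSpace.exp B :=
      NormedSpace.map_exp (algebraMap ℝ ℂ).mapMatrix
        (continuous_id.matrix_map Complex.continuous_ofReal) A
    have hnorm : ‖(NormedSpace.exp A ^ m).map (algebraMap ℝ ℂ)‖ = ‖NormedSpace.exp A ^ m‖ := by
      simp [linfty_opNorm_def]
    rwa [← hnorm, Matrix.map_pow, hexpB]

noncomputable def Matrix.quadFormCLM (v : Fin n → ℝ) : Matrix (Fin n) (Fin n) ℝ →L[ℝ] ℝ :=
  LinearMap.toContinuousLinearMap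
    { toFun := fun N => v ⬝ᵥ (N *ᵥ v)
      map_add' := fun N N' => by simp [add_mulVec, dotProduct_add]
      map_smul' := fun c N => by simp [smul_mulVec] }

theorem Matrix.quadFormCLM_apply (v : Fin n → ℝ) (N : Matrix (Fin n) (Fin n) ℝ) :
    quadFormCLM v N = v ⬝ᵥ (N *ᵥ v) := rfl

theorem Matrix.hasDerivAt_exp_smul_transpose_mul_mul_exp_smul (A M : Matrix (Fin n) (Fin n) ℝ)
    (t : ℝ) :
    HasDerivAt (fun t : ℝ => NormedSpace.exp (t • Aᵀ) * M * NormedSpace.exp (t • A))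
      (NormedSpace.exp (t • Aᵀ) * (Aᵀ * M + M * A) * NormedSpace.exp (t • A)) t := by
  refine (((hasDerivAt_exp_smul_const (𝕂 := ℝ) Aᵀ t).mul_const M).mul
    (hasDerivAt_exp_smul_const' (𝕂 := ℝ) A t)).congr_deriv ?_
  noncomm_ring

theorem IsHurwitz.exists_isBigO_exp_smul_transpose_mul_mul_exp_smul
    {A : Matrix (Fin n) (Fin n) ℝ} (hA : IsHurwitz A) :
    ∃ ε > 0, ∀ M : Matrix (Fin n) (Fin n) ℝ,
      (fun t : ℝ => NormedSpace.exp (t • Aᵀ) * M * NormedSpace.exp (t • A)) =O[atTop]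
        fun t => Real.exp (-ε * t) := by
  obtain ⟨ε, hε, hexp⟩ := hA.exists_isBigO_exp_smul
  have htr : (fun t : ℝ => NormedSpace.exp (t • Aᵀ)) =O[atTop] fun t => Real.exp (-ε * t) := by
    have hT := (LinearMap.toContinuousLinearMap
      (transposeLinearEquiv (Fin n) (Fin n) ℝ ℝ).toLinearMap).isBigO_comp
      (fun t : ℝ => NormedSpace.exp (t • A)) atTop
    refine (hT.trans hexp).congr_left fun t => ?_
    change (NormedSpace.exp (t • A))ᵀ = _
    rw [← exp_transpose, transpose_smul]
  refine ⟨2 * ε, by positivity, fun M => ?_⟩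
  have hprod := (htr.mul (isBigO_const_const M one_ne_zero atTop)).mul hexp
  refine hprod.congr' (Eventually.of_forall fun t => rfl) (Eventually.of_forall fun t => ?_)
  dsimp only
  rw [mul_one, ← Real.exp_add]
  ring_nf

theorem Matrix.exp_smul_mulVec_dotProduct_mulVec (A N : Matrix (Fin n) (Fin n) ℝ) (v : Fin n → ℝ)
    (t : ℝ) :
    (NormedSpace.exp (t • A) *ᵥ v) ⬝ᵥ (N *ᵥ (NormedSpace.exp (t • A) *ᵥ v)) =
      quadFormCLM v (NormedSpace.exp (t • Aᵀ) * N * NormedSpace.exp (t • A)) := by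
  rw [quadFormCLM_apply, mulVec_dotProduct_mulVec_mulVec, ← transpose_smul, exp_transpose]

theorem IsHurwitz.integrableOn_exp_smul_mulVec_dotProduct_mulVec {A : Matrix (Fin n) (Fin n) ℝ}
    (hA : IsHurwitz A) (N : Matrix (Fin n) (Fin n) ℝ) (v : Fin n → ℝ) :
    IntegrableOn
      (fun t : ℝ => (NormedSpace.exp (t • A) *ᵥ v) ⬝ᵥ (N *ᵥ (NormedSpace.exp (t • A) *ᵥ v)))
      (Ioi 0) := by
  obtain ⟨ε, hε, hF⟩ := hA.exists_isBigO_exp_smul_transpose_mul_mul_exp_smul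
  simp only [exp_smul_mulVec_dotProduct_mulVec]
  exact integrable_of_isBigO_exp_neg hε (by fun_prop)
    (((quadFormCLM v).isBigO_comp _ _).trans (hF N))

theorem IsHurwitz.integral_lyapunov {A : Matrix (Fin n) (Fin n) ℝ} (hA : IsHurwitz A)
    (M : Matrix (Fin n) (Fin n) ℝ) (v : Fin n → ℝ) :
    ∫ t in Ioi (0 : ℝ), (NormedSpace.exp (t • A) *ᵥ v) ⬝ᵥ
      ((Aᵀ * M + M * A) *ᵥ (NormedSpace.exp (t • A) *ᵥ v)) = -(v ⬝ᵥ (M *ᵥ v)) := by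
  obtain ⟨ε, hε, hF⟩ := hA.exists_isBigO_exp_smul_transpose_mul_mul_exp_smul
  have hint := hA.integrableOn_exp_smul_mulVec_dotProduct_mulVec (Aᵀ * M + M * A) v
  simp only [exp_smul_mulVec_dotProduct_mulVec] at hint ⊢
  have hderiv : ∀ t ∈ Ioi (0 : ℝ), HasDerivAt
      (fun t => quadFormCLM v (NormedSpace.exp (t • Aᵀ) * M * NormedSpace.exp (t • A)))
      (quadFormCLM v (NormedSpace.exp (t • Aᵀ) * (Aᵀ * M + M * A) * NormedSpace.exp (t • A))) t :=
    fun t _ => (quadFormCLM v).hasFDerivAt.comp_hasDerivAt t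
      (hasDerivAt_exp_smul_transpose_mul_mul_exp_smul A M t)
  have hlim : Tendsto
      (fun t => quadFormCLM v (NormedSpace.exp (t • Aᵀ) * M * NormedSpace.exp (t • A)))
      atTop (nhds 0) :=
    ((quadFormCLM v).isBigO_comp _ _ |>.trans (hF M)).trans_tendsto
      (Real.tendsto_exp_atBot.comp (tendsto_id.const_mul_atTop_of_neg (neg_lt_zero.2 hε)))
  rw [integral_Ioi_of_hasDerivAt_of_tendsto (by fun_prop) hderiv hint hlim]
  simp [quadFormCLM_apply]

theorem IsHurwitz.posDef_of_lyapunov {A Q Y : Matrix (Fin n) (Fin n) ℝ} (hA : IsHurwitz A)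
    (hQ : Q.PosDef) (hY : Y.IsSymm) (hlyap : Aᵀ * Y + Y * A = -Q) : Y.PosDef := by
  refine .of_dotProduct_mulVec_pos (isHermitian_iff_isSymm.2 hY) fun v hv => ?_
  have hYv := hA.integral_lyapunov Y v
  simp only [hlyap, neg_mulVec, dotProduct_neg, integral_neg, neg_inj] at hYv
  have hpos : ∀ t : ℝ,
      0 < (NormedSpace.exp (t • A) *ᵥ v) ⬝ᵥ (Q *ᵥ (NormedSpace.exp (t • A) *ᵥ v)) := fun t => by
    simpa using hQ.dotProduct_mulVec_pos
      ((mulVec_injective_iff_isUnit.2 (isUnit_exp (t • A))).ne hv |>.trans_eq (mulVec_zero _))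
  rw [star_trivial, ← hYv, setIntegral_pos_iff_support_of_nonneg_ae
      (Eventually.of_forall fun t => (hpos t).le)
      (hA.integrableOn_exp_smul_mulVec_dotProduct_mulVec Q v),
    inter_eq_right.2 fun t _ => Function.mem_support.2 (hpos t).ne', Real.volume_Ioi]
  exact ENNReal.zero_lt_top

end

theorem stmt10_general {n s q : ℕ}
    (Abar : Matrix (Fin n) (Fin n) ℝ) (C : Matrix (Fin s) (Fin n) ℝ)
    (Qbar : Matrix (Fin s) (Fin s) ℝ)
    (D : Matrix (Fin q) (Fin q) ℝ) (hD : D.PosDef)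
    (E : Matrix (Fin n) (Fin q) ℝ)
    (P : Matrix (Fin n) (Fin n) ℝ) (hP : P.PosDef)
    (hLMI : (-(Abarᵀ * P + P * Abar + Cᵀ * Qbar * C + P * (E * D⁻¹ * Eᵀ) * P)).PosDef)
    (δ : ℝ) (x₀ : Fin n → ℝ) (hδ : x₀ ⬝ᵥ (P *ᵥ x₀) < δ)
    (hHur : IsHurwitz (Abar + (E * D⁻¹ * Eᵀ) * P))
    (Y : Matrix (Fin n) (Fin n) ℝ) (hYsymm : Y.IsSymm)
    (hYeq : (Abar + (E * D⁻¹ * Eᵀ) * P)ᵀ * Y + Y * (Abar + (E * D⁻¹ * Eᵀ) * P) =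
      -(-(Abarᵀ * P + P * Abar + Cᵀ * Qbar * C + P * (E * D⁻¹ * Eᵀ) * P)))
    (dbar : ℝ → Fin q → ℝ) (xbar : ℝ → Fin n → ℝ)
    (hxbar : xbar = fun t => (NormedSpace.exp (t • (Abar + (E * D⁻¹ * Eᵀ) * P))) *ᵥ x₀)
    (hdbar : dbar = fun t => (D⁻¹ * Eᵀ * P) *ᵥ xbar t) :
    Y.PosDef ∧
      (∫ t in Set.Ioi (0:ℝ),
          ((C *ᵥ xbar t) ⬝ᵥ (Qbar *ᵥ (C *ᵥ xbar t)) - dbar t ⬝ᵥ (D *ᵥ dbar t))) =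
        x₀ ⬝ᵥ (P *ᵥ x₀) - x₀ ⬝ᵥ (Y *ᵥ x₀) ∧
      x₀ ⬝ᵥ (P *ᵥ x₀) - x₀ ⬝ᵥ (Y *ᵥ x₀) < δ := by
  subst hxbar hdbar
  have hDs : D.IsSymm := isHermitian_iff_isSymm.1 hD.isHermitian
  have hPs : Pᵀ = P := (isHermitian_iff_isSymm.1 hP.isHermitian).eq
  have hGs : (E * D⁻¹ * Eᵀ)ᵀ = E * D⁻¹ * Eᵀ := by
    rw [transpose_mul, transpose_mul, transpose_transpose, transpose_nonsing_inv, hDs.eq,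
      Matrix.mul_assoc]
  set A := Abar + (E * D⁻¹ * Eᵀ) * P
  have hcost : ∀ x : Fin n → ℝ, (C *ᵥ x) ⬝ᵥ (Qbar *ᵥ (C *ᵥ x)) -
      ((D⁻¹ * Eᵀ * P) *ᵥ x) ⬝ᵥ (D *ᵥ ((D⁻¹ * Eᵀ * P) *ᵥ x)) =
        -(x ⬝ᵥ ((Aᵀ * (P - Y) + (P - Y) * A) *ᵥ x)) := fun x => by
    rw [mulVec_dotProduct_mulVec_mulVec, mulVec_dotProduct_mulVec_mulVec, ← dotProduct_sub,
      ← sub_mulVec, transpose_inv_mul_mul_mul_inv_mul hDs hD.det_pos.ne'.isUnit, hPs,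
      transpose_mul_sub_add_sub_mul_eq hGs hPs (hYeq.trans (neg_neg _)), ← neg_sub, neg_mulVec,
      dotProduct_neg]
  have hY : Y.PosDef := hHur.posDef_of_lyapunov hLMI hYsymm hYeq
  refine ⟨hY, ?_, ?_⟩
  · simp only [hcost, integral_neg, hHur.integral_lyapunov, neg_neg, sub_mulVec, dotProduct_sub]
  · have hYx₀ := hY.posSemidef.dotProduct_mulVec_nonneg x₀
    rw [star_trivial] at hYx₀
    linarith

/-- Upper bound on the worst-case cost: under the hypotheses of Lemma 3.1,
`J(d̄) = x₀'Px₀ − x₀'Yx₀ < δ`, where `Y ≻ 0` solves the Lyapunov equation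
`(Ā+GP)'Y + Y(Ā+GP) = −Q†` with `Q† = −(Ā'P + PĀ + C'Q̄C + PGP) ≻ 0`. -/
theorem stmt10 {n s q : ℕ}
    (Abar : Matrix (Fin n) (Fin n) ℝ) (C : Matrix (Fin s) (Fin n) ℝ)
    (Qbar : Matrix (Fin s) (Fin s) ℝ) (hQ : Qbar.PosSemidef)
    (D : Matrix (Fin q) (Fin q) ℝ) (hD : D.PosDef)
    (E : Matrix (Fin n) (Fin q) ℝ)
    (P : Matrix (Fin n) (Fin n) ℝ) (hP : P.PosDef)
    (hLMI : (-(Abarᵀ * P + P * Abar + Cᵀ * Qbar * C + P * (E * D⁻¹ * Eᵀ) * P)).PosDef)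
    (δ : ℝ) (x₀ : Fin n → ℝ) (hδ : x₀ ⬝ᵥ (P *ᵥ x₀) < δ)
    (hHur : IsHurwitz (Abar + (E * D⁻¹ * Eᵀ) * P))
    (Y : Matrix (Fin n) (Fin n) ℝ) (hYsymm : Y.IsSymm)
    (hYeq : (Abar + (E * D⁻¹ * Eᵀ) * P)ᵀ * Y + Y * (Abar + (E * D⁻¹ * Eᵀ) * P) =
      -(-(Abarᵀ * P + P * Abar + Cᵀ * Qbar * C + P * (E * D⁻¹ * Eᵀ) * P)))
    (dbar : ℝ → Fin q → ℝ) (xbar : ℝ → Fin n → ℝ)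
    (hxbar : xbar = fun t => (NormedSpace.exp (t • (Abar + (E * D⁻¹ * Eᵀ) * P))) *ᵥ x₀)
    (hdbar : dbar = fun t => (D⁻¹ * Eᵀ * P) *ᵥ xbar t) :
    Y.PosDef ∧
      (∫ t in Set.Ioi (0:ℝ),
          ((C *ᵥ xbar t) ⬝ᵥ (Qbar *ᵥ (C *ᵥ xbar t)) - dbar t ⬝ᵥ (D *ᵥ dbar t))) =
        x₀ ⬝ᵥ (P *ᵥ x₀) - x₀ ⬝ᵥ (Y *ᵥ x₀) ∧
      x₀ ⬝ᵥ (P *ᵥ x₀) - x₀ ⬝ᵥ (Y *ᵥ x₀) < δ :=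
  stmt10_general Abar C Qbar D hD E P hP hLMI δ x₀ hδ hHur Y hYsymm hYeq dbar xbar hxbar hdbar
end

section
/- (Closed-loop guaranteed cost with output feedback) Let A ∈ ℝ^{n×n}, B ∈ ℝ^{n×m}, C ∈ ℝ^{s×n}, E ∈ ℝ^{n×q}, Q ⪰ 0, R ≻ 0, D ≻ 0, G = ED⁻¹E', δ > 0, x₀ ∈ ℝⁿ. Suppose there exist P ≻ 0, M ≻ 0 and F ∈ ℝ^{m×s} with (A+BFC)'P + P(A+BFC) + C'QC + C'F'RFC + PGP ≺ 0, x₀'Px₀ < δ, and (A+BFC+GP)'M + M(A+BFC+GP) ≺ 0. Then A+BFC and A+BFC+GP are Hurwitz, and sup over d ∈ L₂^q([0,∞)) of ∫₀^∞(x'(C'QC + C'F'RFC)x − d'Dd)dt along ẋ = (A+BFC)x + Ed, x(0)=x₀, is strictly less than δ. -/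
open Matrix MeasureTheory

lemma re_quad {n : ℕ} (M : Matrix (Fin n) (Fin n) ℝ) (v : Fin n → ℂ) :
    (star v ⬝ᵥ ((M.map (algebraMap ℝ ℂ)) *ᵥ v)).re =
      (fun i => (v i).re) ⬝ᵥ (M *ᵥ fun i => (v i).re) +
      (fun i => (v i).im) ⬝ᵥ (M *ᵥ fun i => (v i).im) := by
  simp only [dotProduct, mulVec, Pi.star_apply, Matrix.map_apply, Finset.mul_sum,
    ← Finset.sum_add_distrib, Complex.re_sum]
  refine Finset.sum_congr rfl fun i _ => ?_
  refine Finset.sum_congr rfl fun j _ => ?_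
  simp only [RCLike.star_def, Complex.mul_re, Complex.conj_re, Complex.conj_im,
    Complex.ofReal_re, Complex.ofReal_im, Complex.mul_im, Complex.coe_algebraMap, Complex.ofReal_re, Complex.ofReal_im]
  ring

lemma lyap_hurwitz {n : ℕ} {A P : Matrix (Fin n) (Fin n) ℝ} (hP : P.PosDef)
    (h : (-(Aᵀ * P + P * A)).PosDef) : IsHurwitz A := by
  classical
  intro μ hμ
  set Ac := A.map (algebraMap ℝ ℂ) with hAc
  rw [spectrum.mem_iff] at hμ
  rw [Matrix.isUnit_iff_isUnit_det, isUnit_iff_ne_zero, not_not] at hμ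
  obtain ⟨v, hv0, hv⟩ := (Matrix.exists_mulVec_eq_zero_iff).2 hμ
  have heig : Ac *ᵥ v = μ • v := by
    have := hv
    rw [Algebra.algebraMap_eq_smul_one, Matrix.sub_mulVec, Matrix.smul_mulVec,
      Matrix.one_mulVec, sub_eq_zero] at this
    exact this.symm
  set N := Aᵀ * P + P * A with hN
  have hmap : N.map (algebraMap ℝ ℂ) = Acᵀ * (P.map (algebraMap ℝ ℂ)) + (P.map (algebraMap ℝ ℂ)) * Ac := by
    rw [hN, Matrix.map_add, Matrix.map_mul (f := algebraMap ℝ ℂ), Matrix.map_mul (f := algebraMap ℝ ℂ),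
      Matrix.transpose_map]
    exact fun a b => by simp
  have hstar : Ac *ᵥ star v = (starRingEnd ℂ μ) • star v := by
    have h1 : star (Ac *ᵥ v) = Ac *ᵥ star v := by
      ext i
      simp [mulVec, dotProduct, map_sum, hAc, Matrix.map_apply, Complex.conj_ofReal]
    rw [← h1, heig, star_smul]
    rfl
  have key : star v ⬝ᵥ ((N.map (algebraMap ℝ ℂ)) *ᵥ v)
      = (starRingEnd ℂ μ + μ) * (star v ⬝ᵥ ((P.map (algebraMap ℝ ℂ)) *ᵥ v)) := by
    rw [hmap, Matrix.add_mulVec, dotProduct_add, ← Matrix.mulVec_mulVec, ← Matrix.mulVec_mulVec,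
      Matrix.dotProduct_mulVec _ (Acᵀ), Matrix.vecMul_transpose, hstar, heig,
      Matrix.mulVec_smul, smul_dotProduct, dotProduct_smul]
    simp only [smul_eq_mul]
    ring
  have keyre : (star v ⬝ᵥ ((N.map (algebraMap ℝ ℂ)) *ᵥ v)).re
      = (2 * μ.re) * (star v ⬝ᵥ ((P.map (algebraMap ℝ ℂ)) *ᵥ v)).re := by
    rw [key]
    have h2 : starRingEnd ℂ μ + μ = ((2 * μ.re : ℝ) : ℂ) := by
      rw [add_comm, Complex.add_conj]
    rw [h2]
    simp [Complex.mul_re]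
  rw [re_quad, re_quad] at keyre
  set a := fun i => (v i).re with ha
  set b := fun i => (v i).im with hb
  have hab : a ≠ 0 ∨ b ≠ 0 := by
    by_contra hc
    push_neg at hc
    apply hv0
    ext i
    have h1 : a i = 0 := by rw [hc.1]; rfl
    have h2 : b i = 0 := by rw [hc.2]; rfl
    exact Complex.ext h1 h2
  have hPsd := hP.posSemidef
  have hNsd := h.posSemidef
  have hpos : 0 < a ⬝ᵥ (P *ᵥ a) + b ⬝ᵥ (P *ᵥ b) := by
    rcases hab with h1 | h1
    · have := hP.dotProduct_mulVec_pos h1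
      have h2 := hPsd.dotProduct_mulVec_nonneg b
      simp only [star_trivial] at this h2
      linarith
    · have := hP.dotProduct_mulVec_pos h1
      have h2 := hPsd.dotProduct_mulVec_nonneg a
      simp only [star_trivial] at this h2
      linarith
  have hneg : a ⬝ᵥ (N *ᵥ a) + b ⬝ᵥ (N *ᵥ b) < 0 := by
    have e1 : ∀ u : Fin n → ℝ, u ⬝ᵥ (N *ᵥ u) = -(u ⬝ᵥ ((-N) *ᵥ u)) := by
      intro u; rw [Matrix.neg_mulVec, dotProduct_neg, neg_neg]
    rcases hab with h1 | h1
    · have := h.dotProduct_mulVec_pos h1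
      have h2 := hNsd.dotProduct_mulVec_nonneg b
      simp only [star_trivial] at this h2
      rw [e1 a, e1 b]; linarith
    · have := h.dotProduct_mulVec_pos h1
      have h2 := hNsd.dotProduct_mulVec_nonneg a
      simp only [star_trivial] at this h2
      rw [e1 a, e1 b]; linarith
  nlinarith [keyre]

lemma dot_mulVec_transpose {k l : ℕ} (M : Matrix (Fin k) (Fin l) ℝ) (a : Fin k → ℝ) (b : Fin l → ℝ) :
    a ⬝ᵥ (M *ᵥ b) = (Mᵀ *ᵥ a) ⬝ᵥ b := by
  rw [Matrix.dotProduct_mulVec, ← Matrix.mulVec_transpose]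


/-- Closed-loop guaranteed cost with static output feedback (Lemma 3.2): if there exist
`P ≻ 0`, `M ≻ 0`, `F` satisfying the three matrix inequalities, then `A+BFC` and
`A+BFC+GP` are Hurwitz and the worst-case cost is strictly below `δ`
(i.e. there is a bound `c < δ` dominating the cost for every `L₂` disturbance). -/
theorem stmt11 {n m s q : ℕ}
    (A : Matrix (Fin n) (Fin n) ℝ) (B : Matrix (Fin n) (Fin m) ℝ)
    (C : Matrix (Fin s) (Fin n) ℝ) (E : Matrix (Fin n) (Fin q) ℝ)
    (Q : Matrix (Fin s) (Fin s) ℝ) (hQ : Q.PosSemidef)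
    (R : Matrix (Fin m) (Fin m) ℝ) (hR : R.PosDef)
    (D : Matrix (Fin q) (Fin q) ℝ) (hD : D.PosDef)
    (δ : ℝ) (hδpos : 0 < δ) (x₀ : Fin n → ℝ)
    (P : Matrix (Fin n) (Fin n) ℝ) (hP : P.PosDef)
    (M : Matrix (Fin n) (Fin n) ℝ) (hM : M.PosDef)
    (F : Matrix (Fin m) (Fin s) ℝ)
    (hLMI : (-((A + B * F * C)ᵀ * P + P * (A + B * F * C) + Cᵀ * Q * C +
      Cᵀ * Fᵀ * R * F * C + P * (E * D⁻¹ * Eᵀ) * P)).PosDef)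
    (hx₀ : x₀ ⬝ᵥ (P *ᵥ x₀) < δ)
    (hLyap : (-((A + B * F * C + (E * D⁻¹ * Eᵀ) * P)ᵀ * M +
      M * (A + B * F * C + (E * D⁻¹ * Eᵀ) * P))).PosDef) :
    IsHurwitz (A + B * F * C) ∧
      IsHurwitz (A + B * F * C + (E * D⁻¹ * Eᵀ) * P) ∧
      ∃ c : ℝ, c < δ ∧
        ∀ (d : ℝ → Fin q → ℝ) (x : ℝ → Fin n → ℝ),
          Integrable (fun t => d t ⬝ᵥ d t) (volume.restrict (Set.Ioi (0:ℝ))) →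
          x 0 = x₀ →
          (∀ t, HasDerivAt x ((A + B * F * C) *ᵥ x t + E *ᵥ d t) t) →
          (∫ t in Set.Ioi (0:ℝ),
              (x t ⬝ᵥ ((Cᵀ * Q * C + Cᵀ * Fᵀ * R * F * C) *ᵥ x t) -
                d t ⬝ᵥ (D *ᵥ d t))) ≤ c := by
  classical
  -- abbreviations
  set Ab := A + B * F * C with hAb
  set G := E * D⁻¹ * Eᵀ with hG
  set Qb := Cᵀ * Q * C + Cᵀ * Fᵀ * R * F * C with hQb
  -- symmetry facts
  have hDsym : Dᵀ = D := by
    rw [← Matrix.conjTranspose_eq_transpose_of_trivial]; exact hD.isHermitian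
  have hPsym : Pᵀ = P := by
    rw [← Matrix.conjTranspose_eq_transpose_of_trivial]; exact hP.isHermitian
  have hDdet : IsUnit D.det := hD.det_pos.ne'.isUnit
  have hDinv : D * D⁻¹ = 1 := Matrix.mul_nonsing_inv D hDdet
  -- positive semidefiniteness facts
  have hQbpsd : Qb.PosSemidef := by
    have h1 : (Cᵀ * Q * C).PosSemidef := by
      have := hQ.conjTranspose_mul_mul_same C
      simpa [Matrix.conjTranspose_eq_transpose_of_trivial] using this
    have h2 : (Cᵀ * Fᵀ * R * F * C).PosSemidef := by
      have h := hR.posSemidef.conjTranspose_mul_mul_same (F * C)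
      have e : (F * C)ᴴ * R * (F * C) = Cᵀ * Fᵀ * R * F * C := by
        rw [Matrix.conjTranspose_eq_transpose_of_trivial, Matrix.transpose_mul,
          ← Matrix.mul_assoc]
      rwa [e] at h
    rw [hQb]
    exact h1.add h2
  have hGpsd : G.PosSemidef := by
    have := hD.inv.posSemidef.mul_mul_conjTranspose_same E
    simpa [Matrix.conjTranspose_eq_transpose_of_trivial, hG] using this
  have hPGPpsd : (P * G * P).PosSemidef := by
    have := hGpsd.mul_mul_conjTranspose_same P
    simpa [Matrix.conjTranspose_eq_transpose_of_trivial, hPsym] using this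
  -- the full LMI matrix, regrouped
  have hLMI2 : (-(Abᵀ * P + P * Ab + Qb + P * G * P)).PosDef := by
    have heq : Abᵀ * P + P * Ab + Qb + P * G * P =
        Abᵀ * P + P * Ab + Cᵀ * Q * C + Cᵀ * Fᵀ * R * F * C + P * G * P := by
      rw [hQb]; noncomm_ring
    rw [heq]; exact hLMI
  have hS : (-(Abᵀ * P + P * Ab)).PosDef := by
    have heq : -(Abᵀ * P + P * Ab) =
        -(Abᵀ * P + P * Ab + Qb + P * G * P) + (Qb + P * G * P) := by
      noncomm_ring
    rw [heq]
    exact hLMI2.add_posSemidef (hQbpsd.add hPGPpsd)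
  refine ⟨lyap_hurwitz hP hS, lyap_hurwitz hM hLyap, x₀ ⬝ᵥ (P *ᵥ x₀), hx₀, ?_⟩
  intro d x hdInt hx0 hx
  set c := x₀ ⬝ᵥ (P *ᵥ x₀) with hc
  have hc0 : 0 ≤ c := by simpa using hP.posSemidef.dotProduct_mulVec_nonneg x₀
  set f := fun t => x t ⬝ᵥ (Qb *ᵥ x t) - d t ⬝ᵥ (D *ᵥ d t) with hfdef
  set V := fun t => x t ⬝ᵥ (P *ᵥ x t) with hVdef
  set xd := fun t => Ab *ᵥ x t + E *ᵥ d t with hxddef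
  have hVnn : ∀ t, 0 ≤ V t := fun t => by simpa using hP.posSemidef.dotProduct_mulVec_nonneg (x t)
  have hV0 : V 0 = c := by rw [hVdef]; simp [hx0, hc]
  -- derivative of V
  have hVd : ∀ t, HasDerivAt V (xd t ⬝ᵥ (P *ᵥ x t) + x t ⬝ᵥ (P *ᵥ xd t)) t := by
    intro t
    have h1 : ∀ i, HasDerivAt (fun t => x t i) (xd t i) t := fun i =>
      hasDerivAt_pi.1 (hx t) i
    have h2 : HasDerivAt (fun t => ∑ i, x t i * ∑ j, P i j * x t j)
        (∑ i, (xd t i * ∑ j, P i j * x t j + x t i * ∑ j, P i j * xd t j)) t := by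
      apply HasDerivAt.fun_sum
      intro i _
      exact (h1 i).mul (HasDerivAt.fun_sum fun j _ => (h1 j).const_mul _)
    simpa [hVdef, dotProduct, mulVec, Finset.mul_sum, Finset.sum_add_distrib] using h2
  -- pointwise dissipation inequality
  have hptw : ∀ t, f t + (xd t ⬝ᵥ (P *ᵥ x t) + x t ⬝ᵥ (P *ᵥ xd t)) ≤ 0 := by
    intro t
    set u := x t with hu
    set w := d t with hw
    set p := P *ᵥ u with hp
    set e := Eᵀ *ᵥ p with he
    set y := D⁻¹ *ᵥ e with hy
    set z := w - y with hz
    have hDy : D *ᵥ y = e := by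
      rw [hy, Matrix.mulVec_mulVec, hDinv, Matrix.one_mulVec]
    -- z ⬝ D z expansion
    have hzD : z ⬝ᵥ (D *ᵥ z) = w ⬝ᵥ (D *ᵥ w) - 2 * (e ⬝ᵥ w) + e ⬝ᵥ y := by
      rw [hz, Matrix.mulVec_sub, dotProduct_sub, sub_dotProduct, sub_dotProduct, hDy]
      have h1 : w ⬝ᵥ e = e ⬝ᵥ w := dotProduct_comm _ _
      have h2 : y ⬝ᵥ (D *ᵥ w) = e ⬝ᵥ w := by
        rw [dot_mulVec_transpose, hDsym, hDy]
      have h3 : y ⬝ᵥ e = e ⬝ᵥ y := dotProduct_comm _ _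
      rw [h1, h2, h3]; ring
    -- cross terms
    have hEwp : (E *ᵥ w) ⬝ᵥ p = e ⬝ᵥ w := by
      rw [dotProduct_comm, dot_mulVec_transpose, ← he]
    have hPEw : u ⬝ᵥ (P *ᵥ (E *ᵥ w)) = e ⬝ᵥ w := by
      rw [dot_mulVec_transpose, hPsym, ← hp, dot_mulVec_transpose, ← he]
    -- quadratic form in S
    have hSu : u ⬝ᵥ ((Abᵀ * P + P * Ab + Qb + P * G * P) *ᵥ u) =
        (Ab *ᵥ u) ⬝ᵥ p + u ⬝ᵥ (P *ᵥ (Ab *ᵥ u)) + u ⬝ᵥ (Qb *ᵥ u) + e ⬝ᵥ y := by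
      rw [Matrix.add_mulVec, Matrix.add_mulVec, Matrix.add_mulVec,
        dotProduct_add, dotProduct_add, dotProduct_add]
      have h1 : u ⬝ᵥ ((Abᵀ * P) *ᵥ u) = (Ab *ᵥ u) ⬝ᵥ p := by
        rw [← Matrix.mulVec_mulVec, dot_mulVec_transpose, Matrix.transpose_transpose, ← hp]
      have h2 : u ⬝ᵥ ((P * Ab) *ᵥ u) = u ⬝ᵥ (P *ᵥ (Ab *ᵥ u)) := by
        rw [← Matrix.mulVec_mulVec]
      have h3 : u ⬝ᵥ ((P * G * P) *ᵥ u) = e ⬝ᵥ y := by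
        have hmv : (P * G * P) *ᵥ u = P *ᵥ (E *ᵥ (D⁻¹ *ᵥ (Eᵀ *ᵥ p))) := by
          rw [hp, hG]
          simp only [Matrix.mulVec_mulVec, Matrix.mul_assoc]
        rw [hmv, ← he, ← hy, dot_mulVec_transpose, hPsym, ← hp,
          dot_mulVec_transpose, ← he]
      rw [h1, h2, h3]
    -- the quadratic forms have signs
    have hSneg : u ⬝ᵥ ((Abᵀ * P + P * Ab + Qb + P * G * P) *ᵥ u) ≤ 0 := by
      have := hLMI2.posSemidef.dotProduct_mulVec_nonneg u
      simp only [star_trivial, Matrix.neg_mulVec, dotProduct_neg] at this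
      linarith
    have hzpos : 0 ≤ z ⬝ᵥ (D *ᵥ z) := by simpa using hD.posSemidef.dotProduct_mulVec_nonneg z
    -- expand f + V'
    have hexp : f t + (xd t ⬝ᵥ (P *ᵥ x t) + x t ⬝ᵥ (P *ᵥ xd t)) =
        u ⬝ᵥ ((Abᵀ * P + P * Ab + Qb + P * G * P) *ᵥ u) - z ⬝ᵥ (D *ᵥ z) := by
      rw [hfdef, hxddef]
      simp only [← hu, ← hw, ← hp]
      rw [add_dotProduct, Matrix.mulVec_add, dotProduct_add, hEwp, hPEw, hSu, hzD]
      ring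
    rw [hexp]
    linarith
  -- integral estimate
  by_cases hfi : IntegrableOn f (Set.Ioi (0:ℝ)) volume
  · have hbd : ∀ T : ℝ, 0 ≤ T → (∫ t in (0:ℝ)..T, f t) ≤ c := by
      intro T hT
      have hle : (∫ t in (0:ℝ)..T, f t) ≤ (fun t => -V t) T - (fun t => -V t) 0 := by
        apply intervalIntegral.integral_le_sub_of_hasDeriv_right_of_le hT
        · intro t _
          exact ((hVd t).continuousAt).neg.continuousWithinAt
        · intro t _
          exact ((hVd t).neg).hasDerivWithinAt
        · rw [integrableOn_Icc_iff_integrableOn_Ioc]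
          exact hfi.mono_set Set.Ioc_subset_Ioi_self
        · intro t _
          have := hptw t
          linarith
      simp only at hle
      rw [hV0] at hle
      have := hVnn T
      linarith
    have hlim := intervalIntegral_tendsto_integral_Ioi (0:ℝ) hfi Filter.tendsto_id
    refine le_of_tendsto hlim ?_
    filter_upwards [Filter.eventually_ge_atTop (0:ℝ)] with T hT
    exact hbd T hT
  · have hni : ¬ Integrable f (volume.restrict (Set.Ioi (0:ℝ))) := hfi
    rw [MeasureTheory.integral_undef hni]
    exact hc0
end
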